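/- arXiv:2402.08800 — 2 statements merged into one kernel-verified Lean document; each statement's English description precedes it below -/
import Mathlib

section
/- There exist absolute constants c₁ > c₂ > 0 such that for all θ, φ ∈ [0,π], all u, v ∈ [0,1] and all t > 0: exp(-c₁ (1-u) θφ / t) · exp(-c₁ (1-v)(π-θ)(π-φ) / t) ≤ exp(-F(u,v)/t) · exp(F(1,1)/t) ≤ exp(-c₂ (1-u) θφ / t) · exp(-c₂ (1-v)(π-θ)(π-φ) / t), where F(1,1) = (θ-φ)²/4. -/
open Real MeasureTheory Filter

noncomputable section

/-- The Pochhammer symbol `(a)_k`. -/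
def poch (a : ℝ) (k : ℕ) : ℝ := ∏ i ∈ Finset.range k, (a + i)

/-- The Jacobi polynomial `P_n^{α,β}(x)` (valid for arbitrary parameters). -/
def jacobiP (α β : ℝ) (n : ℕ) (x : ℝ) : ℝ :=
  (n.factorial : ℝ)⁻¹ * ∑ k ∈ Finset.range (n + 1),
    (n.choose k : ℝ) * poch (n + α + β + 1) k * poch (α + k + 1) (n - k) * ((x - 1) / 2) ^ k

/-- The normalizing constants `h_n^{α,β}`. -/
def hconst (α β : ℝ) (n : ℕ) : ℝ :=
  if n = 0 then
    (2 : ℝ) ^ (α + β + 1) * Real.Gamma (α + 1) * Real.Gamma (β + 1) / Real.Gamma (α + β + 2)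
  else
    (2 : ℝ) ^ (α + β + 1) * Real.Gamma (n + α + 1) * Real.Gamma (n + β + 1) /
      ((2 * n + α + β + 1) * Real.Gamma (n + α + β + 1) * Real.Gamma (n + 1))

/-- The Jacobi heat kernel `G_t^{α,β}(x,y)`. -/
def jacobiG (α β t x y : ℝ) : ℝ :=
  ∑' n : ℕ, Real.exp (-t * n * (n + α + β + 1)) * jacobiP α β n x * jacobiP α β n y / hconst α β n

/-- The quantity `Z_t^{α,β}(θ,φ)`. -/
def heatZ (α β t θ φ : ℝ) : ℝ :=
  (t + θ * φ) ^ (-α - 1/2) * (t + (π - θ) * (π - φ)) ^ (-β - 1/2) *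
    (1 / Real.sqrt t) * Real.exp (-(θ - φ) ^ 2 / (4 * t))

/-- The constants `𝔠_n^{α,β}`. -/
def frakC (α β : ℝ) (n : ℕ) : ℝ :=
  if n = 0 then Real.Gamma (α + β + 2) / (Real.sqrt π * Real.Gamma (α + β + 5/2))
  else
    Real.Gamma (α + 1) * Real.Gamma (β + 1) * (2 * n + α + β + 1) *
        Real.Gamma (n + α + β + 1) * Real.Gamma (n + 1) /
      (Real.sqrt π * Real.Gamma (α + β + 5/2) * Real.Gamma (n + α + 1) * Real.Gamma (n + β + 1))

/-- The constants `𝔡_k^{λ}`. -/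
def frakD (l : ℝ) (k : ℕ) : ℝ :=
  if k = 0 then Real.Gamma (l + 3/2) / (Real.sqrt π * Real.Gamma (l + 2))
  else
    (2 * k + 2 * l + 1) * Real.Gamma (k + 2 * l + 1) /
      ((2 : ℝ) ^ (2 * l + 1) * Real.Gamma (l + 2) * Real.Gamma (k + l + 1))

/-- The argument `u sin(θ/2) sin(φ/2) + v cos(θ/2) cos(φ/2)`. -/
def mix (θ φ u v : ℝ) : ℝ :=
  u * Real.sin (θ / 2) * Real.sin (φ / 2) + v * Real.cos (θ / 2) * Real.cos (φ / 2)

/-- `Φ_k^{λ}(θ,φ,u,v)`, with the convention that it vanishes for `k < 0`. -/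
def PhiZ (k : ℤ) (l θ φ u v : ℝ) : ℝ :=
  if k < 0 then 0 else frakD l k.toNat * jacobiP l l k.toNat (mix θ φ u v)

/-- The density of the measure `dΠ_α` for `α > -1/2`. -/
def piDens (α u : ℝ) : ℝ :=
  Real.Gamma (α + 1) / (Real.sqrt π * Real.Gamma (α + 1/2)) * (1 - u ^ 2) ^ (α - 1/2)

/-- Integration against `dΠ_α` over `[-1,1]`; for `α = -1/2` the measure is `(δ_{-1}+δ_1)/2`. -/
def piInt (α : ℝ) (f : ℝ → ℝ) : ℝ :=
  if α = -1/2 then (f (-1) + f 1) / 2 else ∫ u in (-1 : ℝ)..1, f u * piDens α u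

/-- Integration against `dΠ_γ` over `[0,1]`; for `γ = -1/2` this gives `f 1 / 2`. -/
def piInt01 (γ : ℝ) (f : ℝ → ℝ) : ℝ :=
  if γ = -1/2 then f 1 / 2 else ∫ s in (0 : ℝ)..1, f s * piDens γ s

/-- The function `Π_α(u)`. -/
def PiFun (α u : ℝ) : ℝ :=
  Real.Gamma (α + 1) / (Real.sqrt π * Real.Gamma (α + 1/2)) *
    ∫ w in (0 : ℝ)..u, (1 - w ^ 2) ^ (α - 1/2)

/-- The auxiliary function `H_t^{λ}(x)`. -/
def Hfun (l t x : ℝ) : ℝ :=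
  ∑' n : ℕ, Real.exp (-t * (2 * n) * (2 * n + 2 * l + 1)) * frakD l (2 * n) * jacobiP l l (2 * n) x

/-- The Jacobi differential operator `J^{α,β}` acting on functions of one real variable. -/
def Jop (α β : ℝ) (f : ℝ → ℝ) (x : ℝ) : ℝ :=
  -(1 - x ^ 2) * deriv (deriv f) x - (β - α - (α + β + 2) * x) * deriv f x

lemma sin_half_bounds {θ : ℝ} (h0 : 0 ≤ θ) (h1 : θ ≤ π) :
    0 ≤ Real.sin (θ/2) ∧ 2 * Real.sin (θ/2) ≤ θ ∧ θ ≤ π * Real.sin (θ/2) := by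
  have hpi := Real.pi_pos
  have h2 : 0 ≤ θ/2 := by linarith
  have h3 : θ/2 ≤ π/2 := by linarith
  have hnn : 0 ≤ Real.sin (θ/2) := Real.sin_nonneg_of_nonneg_of_le_pi h2 (by linarith)
  refine ⟨hnn, by linarith [Real.sin_le h2], ?_⟩
  have h := Real.mul_le_sin h2 h3
  rw [div_mul_eq_mul_div, div_le_iff₀ hpi] at h
  linarith

/-- Key comparison: for `0 ≤ x ≤ y ≤ 1`,
`2 (y - x) ≤ arccos x ^ 2 - arccos y ^ 2 ≤ (π² / 2) (y - x)`. -/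

lemma arccos_sq_sub_bounds {x y : ℝ} (hx0 : 0 ≤ x) (hxy : x ≤ y) (hy1 : y ≤ 1) :
    2 * (y - x) ≤ Real.arccos x ^ 2 - Real.arccos y ^ 2 ∧
      Real.arccos x ^ 2 - Real.arccos y ^ 2 ≤ π ^ 2 / 2 * (y - x) := by
  have hx1 : x ≤ 1 := hxy.trans hy1
  have hy0 : (0 : ℝ) ≤ y := hx0.trans hxy
  set A := Real.arccos x with hA
  set B := Real.arccos y with hB
  have hB0 : 0 ≤ B := Real.arccos_nonneg y
  have hBA : B ≤ A := by
    rw [hA, hB, Real.arccos, Real.arccos]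
    have := Real.monotone_arcsin hxy
    linarith
  have hA2 : A ≤ π / 2 := Real.arccos_le_pi_div_two.2 hx0
  have hcA : Real.cos A = x := Real.cos_arccos (by linarith) hx1
  have hcB : Real.cos B = y := Real.cos_arccos (by linarith) hy1
  have hyx : y - x = 2 * Real.sin ((A + B) / 2) * Real.sin ((A - B) / 2) := by
    have h := Real.cos_sub_cos B A
    rw [hcA, hcB] at h
    rw [show (B - A) / 2 = -((A - B) / 2) by ring, Real.sin_neg] at h
    have : (B + A) / 2 = (A + B) / 2 := by ring
    rw [this] at h
    linarith
  set P := (A + B) / 2 with hP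
  set Q := (A - B) / 2 with hQ
  have hP0 : 0 ≤ P := by rw [hP]; linarith
  have hP2 : P ≤ π / 2 := by rw [hP]; linarith
  have hQ0 : 0 ≤ Q := by rw [hQ]; linarith
  have hQ2 : Q ≤ π / 2 := by rw [hQ]; linarith
  have hsP_le : Real.sin P ≤ P := Real.sin_le hP0
  have hsQ_le : Real.sin Q ≤ Q := Real.sin_le hQ0
  have hsP_ge : 2 * P ≤ Real.sin P * π := by
    have h := Real.mul_le_sin hP0 hP2
    rwa [div_mul_eq_mul_div, div_le_iff₀ Real.pi_pos] at h
  have hsQ_ge : 2 * Q ≤ Real.sin Q * π := by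
    have h := Real.mul_le_sin hQ0 hQ2
    rwa [div_mul_eq_mul_div, div_le_iff₀ Real.pi_pos] at h
  have hsP0 : 0 ≤ Real.sin P := Real.sin_nonneg_of_nonneg_of_le_pi hP0 (by linarith [Real.pi_pos])
  have hsQ0 : 0 ≤ Real.sin Q := Real.sin_nonneg_of_nonneg_of_le_pi hQ0 (by linarith [Real.pi_pos])
  have hAB : A ^ 2 - B ^ 2 = 4 * P * Q := by rw [hP, hQ]; ring
  have hpi : (0 : ℝ) < π := Real.pi_pos
  constructor
  · rw [hyx, hAB]
    nlinarith [mul_le_mul hsP_le hsQ_le hsQ0 hP0]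
  · rw [hyx, hAB]
    nlinarith [mul_le_mul hsP_ge hsQ_ge (by linarith) (mul_nonneg hsP0 hpi.le)]

set_option maxHeartbeats 1000000 in
/-- Lemma 5.4: two-sided exponential bounds for `exp(-F(u,v)/t) exp(F(1,1)/t)`,
where `F(u,v) = arccos(u sin(θ/2) sin(φ/2) + v cos(θ/2) cos(φ/2))²`
and `F(1,1) = (θ-φ)²/4`. -/
theorem exp_F_bounds :
    ∃ c₁ c₂ : ℝ, c₁ > c₂ ∧ c₂ > 0 ∧ ∀ θ φ u v t : ℝ,
      θ ∈ Set.Icc 0 π → φ ∈ Set.Icc 0 π → u ∈ Set.Icc (0 : ℝ) 1 → v ∈ Set.Icc (0 : ℝ) 1 →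
      0 < t →
      (Real.arccos (mix θ φ 1 1)) ^ 2 = (θ - φ) ^ 2 / 4 ∧
      Real.exp (-c₁ * (1 - u) * θ * φ / t) *
          Real.exp (-c₁ * (1 - v) * (π - θ) * (π - φ) / t) ≤
        Real.exp (-(Real.arccos (mix θ φ u v)) ^ 2 / t) *
          Real.exp ((θ - φ) ^ 2 / 4 / t) ∧
      Real.exp (-(Real.arccos (mix θ φ u v)) ^ 2 / t) *
          Real.exp ((θ - φ) ^ 2 / 4 / t) ≤
        Real.exp (-c₂ * (1 - u) * θ * φ / t) *
          Real.exp (-c₂ * (1 - v) * (π - θ) * (π - φ) / t) := by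
  refine ⟨2, 1/5, by norm_num, by norm_num, fun θ φ u v t hθ hφ hu hv ht => ?_⟩
  obtain ⟨hθ0, hθπ⟩ := hθ
  obtain ⟨hφ0, hφπ⟩ := hφ
  obtain ⟨hu0, hu1⟩ := hu
  obtain ⟨hv0, hv1⟩ := hv
  have hpi := Real.pi_pos
  obtain ⟨hsθ0, hsθle, hsθge⟩ := sin_half_bounds hθ0 hθπ
  obtain ⟨hsφ0, hsφle, hsφge⟩ := sin_half_bounds hφ0 hφπ
  obtain ⟨hsθ'0, hsθ'le, hsθ'ge⟩ := sin_half_bounds (θ := π - θ) (by linarith) (by linarith)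
  obtain ⟨hsφ'0, hsφ'le, hsφ'ge⟩ := sin_half_bounds (θ := π - φ) (by linarith) (by linarith)
  have hcθ : Real.cos (θ/2) = Real.sin ((π - θ)/2) := by
    rw [show (π - θ)/2 = π/2 - θ/2 by ring, Real.sin_pi_div_two_sub]
  have hcφ : Real.cos (φ/2) = Real.sin ((π - φ)/2) := by
    rw [show (π - φ)/2 = π/2 - φ/2 by ring, Real.sin_pi_div_two_sub]
  set s := Real.sin (θ/2) * Real.sin (φ/2) with hs
  set c := Real.cos (θ/2) * Real.cos (φ/2) with hc
  have hs0 : 0 ≤ s := mul_nonneg hsθ0 hsφ0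
  have hc0 : 0 ≤ c := by rw [hc, hcθ, hcφ]; exact mul_nonneg hsθ'0 hsφ'0
  have hxdef : mix θ φ u v = u * s + v * c := by rw [hs, hc]; simp only [mix]; ring
  have hydef : mix θ φ 1 1 = s + c := by rw [hs, hc]; simp only [mix]; ring
  have hycos : s + c = Real.cos ((θ - φ)/2) := by
    rw [hs, hc, show (θ - φ)/2 = θ/2 - φ/2 by ring, Real.cos_sub]; ring
  have h1 : Real.arccos (mix θ φ 1 1) ^ 2 = (θ - φ) ^ 2 / 4 := by
    rw [hydef, hycos, ← Real.cos_abs, Real.arccos_cos (abs_nonneg _)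
      (by rcases abs_cases ((θ - φ)/2) with ⟨h, _⟩ | ⟨h, _⟩ <;> linarith), sq_abs]
    ring
  have hB2 : Real.arccos (s + c) ^ 2 = (θ - φ) ^ 2 / 4 := by rw [← hydef]; exact h1
  have hx0 : 0 ≤ u * s + v * c := add_nonneg (mul_nonneg hu0 hs0) (mul_nonneg hv0 hc0)
  have hxy : u * s + v * c ≤ s + c := by
    linarith only [mul_le_of_le_one_left hs0 hu1, mul_le_of_le_one_left hc0 hv1]
  have hy1 : s + c ≤ 1 := by rw [hycos]; exact Real.cos_le_one _
  obtain ⟨hlow, hup⟩ := arccos_sq_sub_bounds hx0 hxy hy1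
  have h1u : (0:ℝ) ≤ 1 - u := by linarith
  have h1v : (0:ℝ) ≤ 1 - v := by linarith
  have hs_le : 4 * s ≤ θ * φ := by
    rw [hs]; linarith only [mul_le_mul hsθle hsφle (by linarith : (0:ℝ) ≤ 2 * Real.sin (φ/2)) hθ0]
  have hc_le : 4 * c ≤ (π - θ) * (π - φ) := by
    rw [hc, hcθ, hcφ]
    linarith only [mul_le_mul hsθ'le hsφ'le (by linarith : (0:ℝ) ≤ 2 * Real.sin ((π - φ)/2))
      (by linarith : (0:ℝ) ≤ π - θ)]
  have hs_ge : θ * φ ≤ π ^ 2 * s := by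
    rw [hs]; linarith only [mul_le_mul hsθge hsφge hφ0 (mul_nonneg hpi.le hsθ0)]
  have hc_ge : (π - θ) * (π - φ) ≤ π ^ 2 * c := by
    rw [hc, hcθ, hcφ]
    linarith only [mul_le_mul hsθ'ge hsφ'ge (by linarith : (0:ℝ) ≤ π - φ)
      (mul_nonneg hpi.le hsθ'0)]
  have hyx_le : 4 * ((s + c) - (u * s + v * c)) ≤
      (1 - u) * (θ * φ) + (1 - v) * ((π - θ) * (π - φ)) := by
    linarith only [mul_le_mul_of_nonneg_left hs_le h1u, mul_le_mul_of_nonneg_left hc_le h1v]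
  have hyx_ge : (1 - u) * (θ * φ) + (1 - v) * ((π - θ) * (π - φ)) ≤
      π ^ 2 * ((s + c) - (u * s + v * c)) := by
    linarith only [mul_le_mul_of_nonneg_left hs_ge h1u, mul_le_mul_of_nonneg_left hc_ge h1v]
  have hπ10 : π ^ 2 ≤ 10 := by
    have h315 := Real.pi_lt_d2
    have h2 := mul_le_mul h315.le h315.le hpi.le (by norm_num : (0:ℝ) ≤ 3.15)
    linarith only [h2]
  have hπ16 : π ^ 2 ≤ 16 := by linarith
  have key_up : Real.arccos (u * s + v * c) ^ 2 - (θ - φ) ^ 2 / 4 ≤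
      2 * ((1 - u) * (θ * φ) + (1 - v) * ((π - θ) * (π - φ))) := by
    rw [← hB2]
    linarith only [hup, hyx_le,
      mul_le_mul_of_nonneg_right hπ16 (by linarith : (0:ℝ) ≤ (s + c) - (u * s + v * c))]
  have key_lo : (1/5) * ((1 - u) * (θ * φ) + (1 - v) * ((π - θ) * (π - φ))) ≤
      Real.arccos (u * s + v * c) ^ 2 - (θ - φ) ^ 2 / 4 := by
    rw [← hB2]
    linarith only [hlow, hyx_ge,
      mul_le_mul_of_nonneg_right hπ10 (by linarith : (0:ℝ) ≤ (s + c) - (u * s + v * c))]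
  refine ⟨h1, ?_, ?_⟩
  · rw [hxdef, ← Real.exp_add, ← Real.exp_add, Real.exp_le_exp, ← add_div, ← add_div,
      div_le_div_iff₀ ht ht]
    linarith only [mul_le_mul_of_nonneg_right key_up ht.le]
  · rw [hxdef, ← Real.exp_add, ← Real.exp_add, Real.exp_le_exp, ← add_div, ← add_div,
      div_le_div_iff₀ ht ht]
    linarith only [mul_le_mul_of_nonneg_right key_lo ht.le]
end
end

section
/- Let γ ≥ -1/2 be fixed. There exists a constant C = C(γ) > 1 such that C^{-1} (1+ξ)^{-γ-1/2} ≤ ∫_{[0,1]} exp(-ξ(1-s)) dΠ_γ(s) ≤ C (1+ξ)^{-γ-1/2} for all ξ ≥ 0. -/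
/-! For `γ > -1/2` the substitution `t = 1 - s` writes the integral as
`c_γ ∫₀¹ t^(p-1) e^(-ξt) (2-t)^(p-1) dt` with `p = γ + 1/2`. The last factor lies between `1`
and `2^(p-1)`, and the truncated Gamma integral `∫₀¹ t^(p-1) e^(-ξt) dt` is comparable to
`(1+ξ)^(-p)`. For `γ = -1/2` the integral is the constant `1/2`. -/

open Real MeasureTheory Filter

noncomputable section

theorem rpow_mem_uIcc_of_mem_Icc {a x y : ℝ} (b : ℝ) (ha : 0 < a) (hx : x ∈ Set.Icc a y) :
    x ^ b ∈ Set.uIcc (a ^ b) (y ^ b) := by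
  have hx0 : 0 ≤ x := ha.le.trans hx.1
  rcases le_total 0 b with hb | hb
  · exact Set.Icc_subset_uIcc
      ⟨rpow_le_rpow ha.le hx.1 hb, rpow_le_rpow hx0 hx.2 hb⟩
  · exact Set.Icc_subset_uIcc'
      ⟨rpow_le_rpow_of_nonpos (ha.trans_le hx.1) hx.2 hb, rpow_le_rpow_of_nonpos ha hx.1 hb⟩

theorem intervalIntegral_mul_mem_Icc {f g : ℝ → ℝ} {a b m M : ℝ} (hab : a ≤ b)
    (hf : IntervalIntegrable f volume a b)
    (hfg : IntervalIntegrable (fun x => f x * g x) volume a b)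
    (hf0 : ∀ x ∈ Set.Icc a b, 0 ≤ f x) (hg : ∀ x ∈ Set.Icc a b, g x ∈ Set.Icc m M) :
    ∫ x in a..b, f x * g x ∈ Set.Icc (m * ∫ x in a..b, f x) (M * ∫ x in a..b, f x) := by
  rw [← intervalIntegral.integral_const_mul, ← intervalIntegral.integral_const_mul]
  refine ⟨intervalIntegral.integral_mono_on hab (hf.const_mul m) hfg fun x hx => ?_,
    intervalIntegral.integral_mono_on hab hfg (hf.const_mul M) fun x hx => ?_⟩
  · rw [mul_comm m]
    exact mul_le_mul_of_nonneg_left (hg x hx).1 (hf0 x hx)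
  · rw [mul_comm M]
    exact mul_le_mul_of_nonneg_left (hg x hx).2 (hf0 x hx)

section GammaIntegral

variable {p : ℝ}

theorem intervalIntegrable_rpow_mul_exp_neg_mul (hp : 0 < p) (ξ a b : ℝ) :
    IntervalIntegrable (fun t => t ^ (p - 1) * exp (-(ξ * t))) volume a b :=
  (intervalIntegral.intervalIntegrable_rpow' (by linarith)).mul_continuousOn
    (by fun_prop)

/-- On `[0, 1/(1+ξ)]` the exponential factor is at least `e⁻¹`. -/
theorem exp_neg_one_div_mul_le_integral_rpow_mul_exp_neg_mul (hp : 0 < p) {ξ : ℝ} (hξ : 0 ≤ ξ) :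
    exp (-1) / p * (1 + ξ) ^ (-p) ≤ ∫ t in (0 : ℝ)..1, t ^ (p - 1) * exp (-(ξ * t)) := by
  have h1ξ : 0 < 1 + ξ := by linarith
  set δ := (1 + ξ)⁻¹
  have hδ0 : 0 < δ := inv_pos.mpr h1ξ
  have hδ1 : δ ≤ 1 := inv_le_one_of_one_le₀ (by linarith)
  have hξδ : ξ * δ ≤ 1 := by
    rw [mul_inv_le_iff₀ h1ξ]
    linarith
  calc exp (-1) / p * (1 + ξ) ^ (-p)
      = ∫ t in (0 : ℝ)..δ, exp (-1) * t ^ (p - 1) := by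
        rw [intervalIntegral.integral_const_mul,
          integral_rpow (Or.inl (by linarith : (-1 : ℝ) < p - 1)), sub_add_cancel,
          zero_rpow hp.ne', inv_rpow h1ξ.le, ← rpow_neg h1ξ.le]
        ring
    _ ≤ ∫ t in (0 : ℝ)..δ, t ^ (p - 1) * exp (-(ξ * t)) := by
        refine intervalIntegral.integral_mono_on hδ0.le
          ((intervalIntegral.intervalIntegrable_rpow' (by linarith)).const_mul _)
          (intervalIntegrable_rpow_mul_exp_neg_mul hp ξ 0 δ) fun t ht => ?_
        rw [mul_comm]
        refine mul_le_mul_of_nonneg_left (exp_le_exp.mpr ?_) (rpow_nonneg ht.1 _)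
        nlinarith [ht.2]
    _ ≤ ∫ t in (0 : ℝ)..1, t ^ (p - 1) * exp (-(ξ * t)) :=
        intervalIntegral.integral_mono_interval le_rfl hδ0.le hδ1
          ((ae_restrict_iff' measurableSet_Ioc).mpr (.of_forall fun t ht =>
            mul_nonneg (rpow_nonneg ht.1.le _) (exp_nonneg _)))
          (intervalIntegrable_rpow_mul_exp_neg_mul hp ξ 0 1)

/-- Since `e^{-ξ t} ≤ e · e^{-(1+ξ) t}` on `[0, 1]`, the integral is dominated by a complete
Gamma integral with rate `1 + ξ`. -/
theorem integral_rpow_mul_exp_neg_mul_le (hp : 0 < p) {ξ : ℝ} (hξ : -1 < ξ) :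
    ∫ t in (0 : ℝ)..1, t ^ (p - 1) * exp (-(ξ * t)) ≤ exp 1 * Gamma p * (1 + ξ) ^ (-p) := by
  have h1ξ : 0 < 1 + ξ := by linarith
  have hint : IntegrableOn (fun t => t ^ (p - 1) * exp (-((1 + ξ) * t))) (Set.Ioi 0) := by
    simpa only [rpow_one, neg_mul] using
      integrableOn_rpow_mul_exp_neg_mul_rpow (by linarith : (-1 : ℝ) < p - 1) one_pos h1ξ
  calc ∫ t in (0 : ℝ)..1, t ^ (p - 1) * exp (-(ξ * t))
      ≤ ∫ t in (0 : ℝ)..1, exp 1 * (t ^ (p - 1) * exp (-((1 + ξ) * t))) := by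
        refine intervalIntegral.integral_mono_on zero_le_one
          (intervalIntegrable_rpow_mul_exp_neg_mul hp ξ 0 1)
          ((intervalIntegrable_rpow_mul_exp_neg_mul hp (1 + ξ) 0 1).const_mul _) fun t ht => ?_
        rw [mul_left_comm, ← exp_add]
        exact mul_le_mul_of_nonneg_left (exp_le_exp.mpr (by nlinarith [ht.2]))
          (rpow_nonneg ht.1 _)
    _ ≤ exp 1 * ∫ t in Set.Ioi (0 : ℝ), t ^ (p - 1) * exp (-((1 + ξ) * t)) := by
        rw [intervalIntegral.integral_const_mul, intervalIntegral.integral_of_le zero_le_one]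
        refine mul_le_mul_of_nonneg_left (setIntegral_mono_set hint ?_
          Set.Ioc_subset_Ioi_self.eventuallyLE) (exp_nonneg _)
        exact (ae_restrict_iff' measurableSet_Ioi).mpr (.of_forall fun t ht =>
          mul_nonneg (rpow_nonneg (le_of_lt ht) _) (exp_nonneg _))
    _ = exp 1 * Gamma p * (1 + ξ) ^ (-p) := by
        rw [integral_rpow_mul_exp_neg_mul_Ioi hp h1ξ, one_div, inv_rpow h1ξ.le,
          ← rpow_neg h1ξ.le]
        ring

end GammaIntegral

def piNorm (γ : ℝ) : ℝ := Gamma (γ + 1) / (sqrt π * Gamma (γ + 1/2))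

theorem piNorm_pos {γ : ℝ} (hγ : -1/2 < γ) : 0 < piNorm γ :=
  div_pos (Gamma_pos_of_pos (by linarith))
    (mul_pos (sqrt_pos.mpr pi_pos) (Gamma_pos_of_pos (by linarith)))

/-- Substituting `t = 1 - s` factors `1 - s² = t (2 - t)`. -/
theorem piInt01_eq_integral_one_sub {γ : ℝ} (hγ : γ ≠ -1/2) (f : ℝ → ℝ) :
    piInt01 γ f = piNorm γ *
      ∫ t in (0 : ℝ)..1, t ^ (γ - 1/2) * f (1 - t) * (2 - t) ^ (γ - 1/2) := by
  rw [piInt01, if_neg hγ, ← intervalIntegral.integral_const_mul]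
  have hsub := intervalIntegral.integral_comp_sub_left
    (fun s => piNorm γ * (s ^ (γ - 1/2) * f (1 - s) * (2 - s) ^ (γ - 1/2))) (a := 0) (b := 1) 1
  norm_num only [sub_zero, sub_self] at hsub
  rw [← hsub]
  refine intervalIntegral.integral_congr fun s hs => ?_
  rw [Set.uIcc_of_le zero_le_one] at hs
  simp only [piDens, piNorm]
  rw [show 1 - s ^ 2 = (1 - s) * (1 + s) by ring,
    mul_rpow (by linarith [hs.2]) (by linarith [hs.1]), sub_sub_cancel,
    show 2 - (1 - s) = 1 + s by ring]
  ring

theorem piInt01_exp_mem_Icc {γ : ℝ} (hγ : -1/2 < γ) {ξ : ℝ} (hξ : 0 ≤ ξ) :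
    piInt01 γ (fun s => exp (-ξ * (1 - s))) ∈ Set.Icc
      (piNorm γ * min 1 (2 ^ (γ - 1/2)) * (exp (-1) / (γ + 1/2)) * (1 + ξ) ^ (-γ - 1/2))
      (piNorm γ * max 1 (2 ^ (γ - 1/2)) * (exp 1 * Gamma (γ + 1/2)) * (1 + ξ) ^ (-γ - 1/2)) := by
  set p := γ + 1/2 with hp_def
  have hp : 0 < p := by linarith
  have hexp : γ - 1/2 = p - 1 := by ring
  have hneg : -γ - 1/2 = -p := by ring
  have hweight : ∀ t ∈ Set.Icc (0 : ℝ) 1,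
      (2 - t) ^ (p - 1) ∈ Set.Icc (min 1 (2 ^ (p - 1))) (max 1 (2 ^ (p - 1))) := fun t ht => by
    simpa only [one_rpow, Set.uIcc] using
      rpow_mem_uIcc_of_mem_Icc (p - 1) one_pos ⟨by linarith [ht.2], by linarith [ht.1]⟩
  have hcont : ContinuousOn (fun t : ℝ => (2 - t) ^ (p - 1)) (Set.uIcc 0 1) :=
    ContinuousOn.rpow_const (by fun_prop) fun t ht => by
      rw [Set.uIcc_of_le zero_le_one] at ht
      exact Or.inl (by linarith [ht.2])
  have hmid := intervalIntegral_mul_mem_Icc zero_le_one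
    (intervalIntegrable_rpow_mul_exp_neg_mul hp ξ 0 1)
    ((intervalIntegrable_rpow_mul_exp_neg_mul hp ξ 0 1).mul_continuousOn hcont)
    (fun t ht => mul_nonneg (rpow_nonneg ht.1 _) (exp_nonneg _)) hweight
  have hlow := exp_neg_one_div_mul_le_integral_rpow_mul_exp_neg_mul hp hξ
  have hup := integral_rpow_mul_exp_neg_mul_le hp (by linarith : -1 < ξ)
  have hc := piNorm_pos hγ
  have hm : 0 < min 1 ((2 : ℝ) ^ (p - 1)) := lt_min one_pos (by positivity)
  have hM : 0 ≤ max 1 ((2 : ℝ) ^ (p - 1)) := le_max_of_le_left zero_le_one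
  rw [piInt01_eq_integral_one_sub hγ.ne', hexp, hneg]
  simp only [sub_sub_cancel, neg_mul]
  constructor
  · calc _ = piNorm γ * (min 1 (2 ^ (p - 1)) * (exp (-1) / p * (1 + ξ) ^ (-p))) := by ring
      _ ≤ _ := mul_le_mul_of_nonneg_left
        ((mul_le_mul_of_nonneg_left hlow hm.le).trans hmid.1) hc.le
  · calc _ ≤ piNorm γ * (max 1 (2 ^ (p - 1)) * (exp 1 * Gamma p * (1 + ξ) ^ (-p))) :=
          mul_le_mul_of_nonneg_left (hmid.2.trans (mul_le_mul_of_nonneg_left hup hM)) hc.le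
      _ = _ := by ring

theorem exists_one_lt_inv_le_and_le {L U : ℝ} (hL : 0 < L) : ∃ C > 1, C⁻¹ ≤ L ∧ U ≤ C :=
  ⟨max L⁻¹ U + 1, by linarith [le_max_left L⁻¹ U, inv_pos.mpr hL],
    inv_le_of_inv_le₀ hL (by linarith [le_max_left L⁻¹ U]), by linarith [le_max_right L⁻¹ U]⟩

/-- Lemma 5.5: for fixed `γ ≥ -1/2`,
`∫_{[0,1]} exp(-ξ(1-s)) dΠ_γ(s) ≍ (1+ξ)^{-γ-1/2}` uniformly in `ξ ≥ 0`. -/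
theorem piInt01_exp_estimate (γ : ℝ) (hγ : γ ≥ -1/2) :
    ∃ C : ℝ, C > 1 ∧ ∀ ξ : ℝ, 0 ≤ ξ →
      C⁻¹ * (1 + ξ) ^ (-γ - 1/2) ≤ piInt01 γ (fun s => Real.exp (-ξ * (1 - s))) ∧
      piInt01 γ (fun s => Real.exp (-ξ * (1 - s))) ≤ C * (1 + ξ) ^ (-γ - 1/2) := by
  rcases hγ.eq_or_lt with rfl | hγ
  · exact ⟨2, one_lt_two, fun ξ _ => by norm_num [piInt01]⟩
  have hL : 0 < piNorm γ * min 1 (2 ^ (γ - 1/2)) * (exp (-1) / (γ + 1/2)) :=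
    mul_pos (mul_pos (piNorm_pos hγ) (lt_min one_pos (by positivity)))
      (div_pos (exp_pos _) (by linarith))
  obtain ⟨C, hC, hCL, hCU⟩ := exists_one_lt_inv_le_and_le hL
    (U := piNorm γ * max 1 (2 ^ (γ - 1/2)) * (exp 1 * Gamma (γ + 1/2)))
  refine ⟨C, hC, fun ξ hξ => ?_⟩
  have hw : 0 ≤ (1 + ξ) ^ (-γ - 1/2) := by positivity
  obtain ⟨hlow, hup⟩ := piInt01_exp_mem_Icc hγ hξ
  exact ⟨(mul_le_mul_of_nonneg_right hCL hw).trans hlow,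
    hup.trans (mul_le_mul_of_nonneg_right hCU hw)⟩
end
end
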